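/- Let M, L be positive integers, S_1, …, S_L ⊆ Fin M a hierarchical (laminar) family with integer capacities C_1, …, C_L ≥ 1, and p̃ : Fin M → ℝ. Then the greedy output x* satisfies ∑_{j ∈ S_l} x*_j ≤ C_l for every l ∈ {1,…,L}, and moreover x*_j = 0 whenever p̃_j ≤ 0. (Feasibility of the greedy solution.) -/

import Mathlib

attribute [local instance] Classical.propDecidable


/-- One step of the greedy algorithm: from the current candidate set `A`, keep all items
outside `S`, and inside `S` keep only the (at most) `C` smallest items of `A ∩ S` with
respect to the tie-broken order `r` (an item is kept iff fewer than `C` items of `A ∩ S`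
precede it under `r`). -/
noncomputable def greedyStep {M : ℕ} (r : Fin M → Fin M → Prop) (C : ℕ)
    (S A : Finset (Fin M)) : Finset (Fin M) :=
  (A \ S) ∪ (A ∩ S).filter (fun j => ((A ∩ S).filter (fun j' => r j' j)).card < C)

/-- The greedy iterates: `A_0 = {j : 0 < p j}` and `A_{l+1} = greedyStep r (C l) (S l) A_l`
for `l < L` (indices beyond `L` leave the set unchanged). -/
noncomputable def greedySets {M L : ℕ} (r : Fin M → Fin M → Prop)
    (S : Fin L → Finset (Fin M)) (C : Fin L → ℕ) (p : Fin M → ℝ) : ℕ → Finset (Fin M)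
  | 0 => Finset.univ.filter (fun j => 0 < p j)
  | n + 1 =>
    if h : n < L then
      greedyStep r (C ⟨n, h⟩) (S ⟨n, h⟩) (greedySets r S C p n)
    else greedySets r S C p n

/-- The greedy output `x*`: the 0/1 indicator (as a real-valued function) of the final
greedy set `A_L`. -/
noncomputable def greedyOutput {M L : ℕ} (r : Fin M → Fin M → Prop)
    (S : Fin L → Finset (Fin M)) (C : Fin L → ℕ) (p : Fin M → ℝ) : Fin M → ℝ :=
  fun j => if j ∈ greedySets r S C p L then 1 else 0

/-! The greedy iterates only ever shrink, and the step at `S l` leaves at most `C l` items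
inside `S l`, since the items it keeps there have pairwise distinct `r`-ranks in `A ∩ S`,
all below `C l`. Hence the final set meets every `S l` in at most `C l` items, and it is
contained in `A_0 = {j : 0 < p j}`. -/

open Finset

section Rank

variable {α : Type*} (r : α → α → Prop)

lemma card_filter_rel_lt_of_rel [IsStrictOrder α r] {B : Finset α} {a b : α} (ha : a ∈ B) (hab : r a b) :
    #(B.filter (r · a)) < #(B.filter (r · b)) := by
  refine card_lt_card ⟨monotone_filter_right B fun _ _ h => _root_.trans h hab, fun hsub => ?_⟩
  exact irrefl a (mem_filter.1 (hsub (mem_filter.2 ⟨ha, hab⟩))).2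

lemma card_filter_rel_injOn [IsStrictTotalOrder α r] (B : Finset α) :
    Set.InjOn (fun a => #(B.filter (r · a))) B := by
  intro a ha b hb hab
  rcases trichotomous_of r a b with h | h | h
  · exact absurd hab (card_filter_rel_lt_of_rel r ha h).ne
  · exact h
  · exact absurd hab (card_filter_rel_lt_of_rel r hb h).ne'

lemma card_filter_card_filter_rel_lt_le [IsStrictTotalOrder α r] (B : Finset α) (C : ℕ) :
    #(B.filter fun a => #(B.filter (r · a)) < C) ≤ C := by
  set T := B.filter fun a => #(B.filter (r · a)) < C
  have hinj : Set.InjOn (fun a => #(B.filter (r · a))) T :=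
    (card_filter_rel_injOn r B).mono (filter_subset _ B)
  calc #T = #(T.image fun a => #(B.filter (r · a))) := (card_image_of_injOn hinj).symm
    _ ≤ #(range C) := card_le_card fun n hn => by
        obtain ⟨a, ha, rfl⟩ := mem_image.1 hn
        exact mem_range.2 (mem_filter.1 ha).2
    _ = C := card_range C

end Rank

section Greedy

variable {M L : ℕ} (r : Fin M → Fin M → Prop)

lemma greedyStep_subset (C : ℕ) (S A : Finset (Fin M)) : greedyStep r C S A ⊆ A :=
  union_subset sdiff_subset ((filter_subset _ _).trans inter_subset_left)

lemma card_greedyStep_inter_le [IsStrictTotalOrder (Fin M) r] (C : ℕ) (S A : Finset (Fin M)) :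
    #(greedyStep r C S A ∩ S) ≤ C := by
  have hinter : greedyStep r C S A ∩ S =
      (A ∩ S).filter fun j => #((A ∩ S).filter (r · j)) < C := by
    rw [greedyStep, union_inter_distrib_right, sdiff_inter_self, empty_union,
      inter_eq_left.2 ((filter_subset _ _).trans inter_subset_right)]
  rw [hinter]
  exact card_filter_card_filter_rel_lt_le r (A ∩ S) C

variable (S : Fin L → Finset (Fin M)) (C : Fin L → ℕ) (p : Fin M → ℝ)

lemma greedySets_succ (l : Fin L) :
    greedySets r S C p (l + 1) = greedyStep r (C l) (S l) (greedySets r S C p l) :=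
  dif_pos l.isLt

lemma greedySets_antitone : Antitone (greedySets r S C p) := by
  refine antitone_nat_of_succ_le fun n => ?_
  rw [greedySets]
  split
  · exact greedyStep_subset r _ _ _
  · exact Subset.rfl

lemma pos_of_mem_greedySets {n : ℕ} {j : Fin M} (hj : j ∈ greedySets r S C p n) : 0 < p j := by
  have h0 := greedySets_antitone r S C p n.zero_le hj
  rw [greedySets, mem_filter] at h0
  exact h0.2

lemma card_greedySets_inter_le [IsStrictTotalOrder (Fin M) r] (l : Fin L) :
    #(greedySets r S C p L ∩ S l) ≤ C l :=
  calc #(greedySets r S C p L ∩ S l)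
      ≤ #(greedySets r S C p (l + 1) ∩ S l) :=
        card_le_card (inter_subset_inter_right (greedySets_antitone r S C p l.isLt))
    _ ≤ C l := by
        rw [greedySets_succ]
        exact card_greedyStep_inter_le r (C l) (S l) _

lemma sum_greedyOutput (T : Finset (Fin M)) :
    ∑ j ∈ T, greedyOutput r S C p j = #(greedySets r S C p L ∩ T) := by
  unfold greedyOutput
  rw [sum_boole, filter_mem_eq_inter, inter_comm]

end Greedy

theorem greedy_feasible_general
    {M L : ℕ}
    (S : Fin L → Finset (Fin M)) (C : Fin L → ℕ)
    (p : Fin M → ℝ)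
    (r : Fin M → Fin M → Prop) (hr : IsStrictTotalOrder (Fin M) r) :
    (∀ l : Fin L, ∑ j ∈ S l, greedyOutput r S C p j ≤ (C l : ℝ)) ∧
    (∀ j : Fin M, p j ≤ 0 → greedyOutput r S C p j = 0) := by
  refine ⟨fun l => ?_, fun j hj => if_neg fun hmem => ?_⟩
  · rw [sum_greedyOutput]
    exact_mod_cast card_greedySets_inter_le r S C p l
  · exact hj.not_gt (pos_of_mem_greedySets r S C p hmem)

/-- **Feasibility of the greedy solution.** For a hierarchical (laminar) family of local
constraints, listed in a linear order extending strict inclusion, with capacities `C l ≥ 1`,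
the greedy output `x*` satisfies every local constraint, and `x* j = 0` whenever `p̃ j ≤ 0`. -/
theorem greedy_feasible
    {M L : ℕ} (hM : 0 < M) (hL : 0 < L)
    (S : Fin L → Finset (Fin M)) (C : Fin L → ℕ) (hC : ∀ l, 1 ≤ C l)
    (hlaminar : ∀ l l' : Fin L, (S l ∩ S l').Nonempty → S l ⊆ S l' ∨ S l' ⊆ S l)
    (horder : ∀ a b : Fin L, S a ⊂ S b → a < b)
    (p : Fin M → ℝ)
    (r : Fin M → Fin M → Prop) (hr : IsStrictTotalOrder (Fin M) r)
    (hrefine : ∀ j j' : Fin M, p j > p j' → r j j') :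
    (∀ l : Fin L, ∑ j ∈ S l, greedyOutput r S C p j ≤ (C l : ℝ)) ∧
    (∀ j : Fin M, p j ≤ 0 → greedyOutput r S C p j = 0) :=
  greedy_feasible_general S C p r hr
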